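/- arXiv:2409.04129 — 2 statements merged into one kernel-verified Lean document; each statement's English description precedes it below -/
import Mathlib

section
/- Let n ≥ 1 be an integer, γ ∈ (1,(n+2)/n], κ > 0 and C₀ > 0. There exists a constant C > 0 depending only on n, C₀, γ and κ such that for all (ρ₁,u₁), (ρ₂,u₂) ∈ [0,∞)×ℝⁿ with ρ₁, ρ₂, |u₁|, |u₂| ≤ C₀, one has ∫_{ℝⁿ} (1+|v|²) |M[ρ₁,u₁](v) − M[ρ₂,u₂](v)| dv ≤ C ( |ρ₁ − ρ₂| + |u₁ − u₂| ). -/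
open MeasureTheory Real

noncomputable section

abbrev En (n : ℕ) := EuclideanSpace ℝ (Fin n)

/-- degree of freedom `d = 2/(γ-1) - n`. -/
def dof (n : ℕ) (γ : ℝ) : ℝ := 2 / (γ - 1) - n

/-- the constant `c₁ = 2γκ/(γ-1)`. -/
def cc1 (γ κ : ℝ) : ℝ := 2 * γ * κ / (γ - 1)

/-- the constant `c₂ = (2γκ/(γ-1))^{-1/(γ-1)} Γ(γ/(γ-1)) / (π^{n/2} Γ(d/2+1))`. -/
def cc2 (n : ℕ) (γ κ : ℝ) : ℝ :=
  (2 * γ * κ / (γ - 1)) ^ (-(1 / (γ - 1))) * Real.Gamma (γ / (γ - 1)) /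
    (Real.pi ^ ((n : ℝ) / 2) * Real.Gamma (dof n γ / 2 + 1))

/-- the Maxwellian: `M[ρ,u](v) = c₂ (c₁ ρ^{γ-1} - |v-u|²)₊^{d/2}` if `γ < (n+2)/n`,
and `M[ρ,u](v) = c₂·1_{c₁ ρ^{2/n} ≥ |v-u|²}` if `γ = (n+2)/n`. -/
def MaxwG (n : ℕ) (γ κ ρ : ℝ) (u v : En n) : ℝ :=
  if γ = ((n : ℝ) + 2) / n then
    (if ‖v - u‖ ^ 2 ≤ cc1 γ κ * ρ ^ (2 / (n : ℝ)) then cc2 n γ κ else 0)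
  else cc2 n γ κ * (max (cc1 γ κ * ρ ^ (γ - 1) - ‖v - u‖ ^ 2) 0) ^ (dof n γ / 2)

namespace Stmt4Aux
open Set Metric

lemma pow_succ_sub_le (m : ℕ) {a b : ℝ} (ha : 0 ≤ a) (hab : a ≤ b) :
    b ^ (m + 1) - a ^ (m + 1) ≤ (m + 1 : ℝ) * b ^ m * (b - a) := by
  induction m with
  | zero => norm_num
  | succ k ih =>
    have hb : 0 ≤ b := ha.trans hab
    have h1 : a ^ (k + 1) ≤ b ^ (k + 1) := pow_le_pow_left₀ ha hab _
    have h2 : 0 ≤ b ^ k := pow_nonneg hb _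
    have h3 : b * (b ^ (k + 1) - a ^ (k + 1)) ≤ b * ((k + 1 : ℝ) * b ^ k * (b - a)) :=
      mul_le_mul_of_nonneg_left ih hb
    have key : b ^ (k + 2) - a ^ (k + 2)
        = b * (b ^ (k + 1) - a ^ (k + 1)) + a ^ (k + 1) * (b - a) := by ring
    have h4 : a ^ (k + 1) * (b - a) ≤ b ^ (k + 1) * (b - a) :=
      mul_le_mul_of_nonneg_right h1 (by linarith)
    have h5 : b * ((k + 1 : ℝ) * b ^ k * (b - a)) = (k + 1 : ℝ) * b ^ (k + 1) * (b - a) := by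
      ring
    push_cast
    nlinarith [pow_nonneg hb (k + 1)]

lemma nontrivial_En {n : ℕ} (hn : 1 ≤ n) : Nontrivial (En n) :=
  Module.nontrivial_of_finrank_pos (R := ℝ) (by rw [finrank_euclideanSpace_fin]; omega)

lemma vol_sandwich {n : ℕ} (hn : 1 ≤ n) {u : En n} {r : ℝ} (hr : 0 ≤ r) {S : Set (En n)}
    (h1 : ball u r ⊆ S) (h2 : S ⊆ closedBall u r) :
    volume S = ENNReal.ofReal (r ^ n) * volume (ball (0 : En n) 1) := by
  haveI : Nontrivial (En n) := nontrivial_En hn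
  apply le_antisymm
  · calc volume S ≤ volume (closedBall u r) := measure_mono h2
      _ = _ := by rw [Measure.addHaar_closedBall volume u hr, finrank_euclideanSpace_fin]
  · calc ENNReal.ofReal (r ^ n) * volume (ball (0 : En n) 1) = volume (ball u r) := by
          rw [Measure.addHaar_ball volume u hr, finrank_euclideanSpace_fin]
      _ ≤ volume S := measure_mono h1

lemma vol_sandwich_toReal {n : ℕ} (hn : 1 ≤ n) {u : En n} {r : ℝ} (hr : 0 ≤ r) {S : Set (En n)}
    (h1 : ball u r ⊆ S) (h2 : S ⊆ closedBall u r) :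
    (volume S).toReal = r ^ n * (volume (ball (0 : En n) 1)).toReal := by
  rw [vol_sandwich hn hr h1 h2, ENNReal.toReal_mul, ENNReal.toReal_ofReal (by positivity)]

lemma diff_bound {n : ℕ} (hn : 1 ≤ n) {u₁ u₂ : En n} {r₁ r₂ Rb : ℝ}
    (h0 : 0 ≤ r₂) (h12 : r₂ ≤ r₁) (hB : r₁ ≤ Rb) {S₁ S₂ : Set (En n)}
    (hb₁ : ball u₁ r₁ ⊆ S₁) (hc₂ : S₂ ⊆ closedBall u₂ r₂) :
    (volume (S₂ \ S₁)).toReal ≤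
      n * (volume (ball (0 : En n) 1)).toReal * (Rb + dist u₁ u₂) ^ (n - 1) * dist u₁ u₂ := by
  have hω0 : 0 ≤ (volume (ball (0 : En n) 1)).toReal := ENNReal.toReal_nonneg
  have hδ : 0 ≤ dist u₁ u₂ := dist_nonneg
  have h1 : 0 ≤ r₁ := h0.trans h12
  have hRb : 0 ≤ Rb := h1.trans hB
  set ω := (volume (ball (0 : En n) 1)).toReal with hω
  set δ := dist u₁ u₂ with hδd
  rcases lt_or_ge (r₂ + δ) r₁ with hcase | hcase
  · have hempty : S₂ \ S₁ = ∅ := by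
      rw [diff_eq_empty]
      intro v hv
      apply hb₁
      have h2 := hc₂ hv
      rw [mem_closedBall] at h2
      rw [mem_ball]
      calc dist v u₁ ≤ dist v u₂ + dist u₂ u₁ := dist_triangle _ _ _
        _ ≤ r₂ + δ := by rw [dist_comm u₂ u₁]; linarith
        _ < r₁ := hcase
    rw [hempty]
    simp only [measure_empty, ENNReal.toReal_zero]
    positivity
  · -- r₁ ≤ r₂ + δ
    have hsub : S₂ \ S₁ ⊆ closedBall u₁ (r₂ + δ) \ ball u₁ r₁ := by
      rintro v ⟨hv2, hv1⟩
      refine ⟨?_, fun h => hv1 (hb₁ h)⟩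
      rw [mem_closedBall]
      have h2 := hc₂ hv2
      rw [mem_closedBall] at h2
      calc dist v u₁ ≤ dist v u₂ + dist u₂ u₁ := dist_triangle _ _ _
        _ ≤ r₂ + δ := by rw [dist_comm u₂ u₁]; linarith
    have hbs : ball u₁ r₁ ⊆ closedBall u₁ (r₂ + δ) :=
      ball_subset_closedBall.trans (closedBall_subset_closedBall hcase)
    have hmeq : volume (closedBall u₁ (r₂ + δ) \ ball u₁ r₁)
        = volume (closedBall u₁ (r₂ + δ)) - volume (ball u₁ r₁) :=
      measure_diff hbs measurableSet_ball.nullMeasurableSet measure_ball_lt_top.ne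
    have h2δ : (0:ℝ) ≤ r₂ + δ := by linarith
    have e1 : volume (closedBall u₁ (r₂ + δ))
        = ENNReal.ofReal ((r₂ + δ) ^ n) * volume (ball (0 : En n) 1) :=
      vol_sandwich hn h2δ ball_subset_closedBall (subset_refl _)
    have e2 : volume (ball u₁ r₁)
        = ENNReal.ofReal (r₁ ^ n) * volume (ball (0 : En n) 1) :=
      vol_sandwich hn h1 (subset_refl _) ball_subset_closedBall
    have hfin : volume (closedBall u₁ (r₂ + δ) \ ball u₁ r₁) ≠ ⊤ :=
      (lt_of_le_of_lt (measure_mono diff_subset) measure_closedBall_lt_top).ne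
    have step1 : (volume (S₂ \ S₁)).toReal ≤ (volume (closedBall u₁ (r₂ + δ) \ ball u₁ r₁)).toReal :=
      ENNReal.toReal_mono hfin (measure_mono hsub)
    have hle : volume (ball u₁ r₁) ≤ volume (closedBall u₁ (r₂ + δ)) := measure_mono hbs
    have step2 : (volume (closedBall u₁ (r₂ + δ) \ ball u₁ r₁)).toReal
        = (r₂ + δ) ^ n * ω - r₁ ^ n * ω := by
      rw [hmeq, ENNReal.toReal_sub_of_le hle measure_closedBall_lt_top.ne]
      rw [e1, e2, ENNReal.toReal_mul, ENNReal.toReal_mul,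
        ENNReal.toReal_ofReal (by positivity), ENNReal.toReal_ofReal (by positivity)]
    obtain ⟨m, rfl⟩ : ∃ m, n = m + 1 := ⟨n - 1, (Nat.succ_pred_eq_of_pos hn).symm⟩
    have key : (r₂ + δ) ^ (m + 1) - r₁ ^ (m + 1) ≤ (m + 1 : ℝ) * (Rb + δ) ^ m * δ := by
      have k1 : (r₂ + δ) ^ (m + 1) ≤ (r₁ + δ) ^ (m + 1) :=
        pow_le_pow_left₀ h2δ (by linarith) _
      have k2 : (r₁ + δ) ^ (m + 1) - r₁ ^ (m + 1) ≤ (m + 1 : ℝ) * (r₁ + δ) ^ m * δ := by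
        have := pow_succ_sub_le m h1 (by linarith : r₁ ≤ r₁ + δ)
        simpa using this
      have k3 : (r₁ + δ) ^ m ≤ (Rb + δ) ^ m := pow_le_pow_left₀ (by linarith) (by linarith) _
      have k4 : (m + 1 : ℝ) * (r₁ + δ) ^ m * δ ≤ (m + 1 : ℝ) * (Rb + δ) ^ m * δ :=
        mul_le_mul_of_nonneg_right
          (mul_le_mul_of_nonneg_left k3 (by positivity : (0:ℝ) ≤ (m:ℝ) + 1)) hδ
      linarith
    have hmm : ((m + 1 : ℕ) : ℝ) = (m + 1 : ℝ) := by push_cast; ring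
    calc (volume (S₂ \ S₁)).toReal ≤ (r₂ + δ) ^ (m + 1) * ω - r₁ ^ (m + 1) * ω := by
          rw [← step2]; exact step1
      _ = ((r₂ + δ) ^ (m + 1) - r₁ ^ (m + 1)) * ω := by ring
      _ ≤ ((m + 1 : ℝ) * (Rb + δ) ^ m * δ) * ω := mul_le_mul_of_nonneg_right key hω0
      _ = (m + 1 : ℕ) * ω * (Rb + δ) ^ ((m + 1) - 1) * δ := by
          simp only [Nat.add_sub_cancel, hmm]; ring

lemma integrable_meas_lt {n : ℕ} {f : En n → ℝ} (hf : Integrable f) (hf0 : 0 ≤ᵐ[volume] f) :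
    IntegrableOn (fun t => (volume {v : En n | t < f v}).toReal) (Ioi 0) := by
  have hm : Measurable fun t : ℝ => (volume {v : En n | t < f v}) :=
    Antitone.measurable (fun s t hst => measure_mono (fun v hv => lt_of_le_of_lt hst hv))
  refine ⟨hm.ennreal_toReal.aestronglyMeasurable.restrict, ?_⟩
  rw [hasFiniteIntegral_iff_ofReal (ae_of_all _ fun t => ENNReal.toReal_nonneg)]
  have heq : ∫⁻ t in Ioi (0:ℝ), ENNReal.ofReal (volume {v : En n | t < f v}).toReal
      = ∫⁻ t in Ioi (0:ℝ), volume {v : En n | t < f v} := by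
    apply setLIntegral_congr_fun measurableSet_Ioi
    exact fun t ht => ENNReal.ofReal_toReal (hf.measure_gt_lt_top ht).ne
  rw [heq, ← lintegral_eq_lintegral_meas_lt _ hf0 hf.aemeasurable]
  exact hf.lintegral_lt_top

lemma master {n : ℕ} (hn : 1 ≤ n) (f g : En n → ℝ)
    (hf : Integrable f) (hg : Integrable g) (hfm : Measurable f)
    (hf0 : ∀ v, 0 ≤ f v) (hg0 : ∀ v, 0 ≤ g v)
    (u₁ u₂ : En n) (r₁ r₂ : ℝ → ℝ) (Rb T : ℝ) (hT : 0 ≤ T)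
    (hs1b : ∀ t, 0 < t → ball u₁ (r₁ t) ⊆ {v | t < f v})
    (hs1c : ∀ t, 0 < t → {v | t < f v} ⊆ closedBall u₁ (r₁ t))
    (hs2b : ∀ t, 0 < t → ball u₂ (r₂ t) ⊆ {v | t < g v})
    (hs2c : ∀ t, 0 < t → {v | t < g v} ⊆ closedBall u₂ (r₂ t))
    (hr0 : ∀ t, 0 < t → 0 ≤ r₂ t)
    (hr12 : ∀ t, 0 < t → r₂ t ≤ r₁ t)
    (hrB : ∀ t, 0 < t → r₁ t ≤ Rb)
    (hcutf : ∀ t, T ≤ t → {v | t < f v} = ∅)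
    (hcutg : ∀ t, T ≤ t → {v | t < g v} = ∅) :
    ∫ v, |f v - g v| ≤
      T * (2 * n * (volume (ball (0 : En n) 1)).toReal * (Rb + dist u₁ u₂) ^ (n - 1)
        * dist u₁ u₂) + ((∫ v, f v) - ∫ v, g v) := by
  set ω := (volume (ball (0 : En n) 1)).toReal with hω
  set δ := dist u₁ u₂ with hδd
  set K : ℝ := n * ω * (Rb + δ) ^ (n - 1) * δ with hK
  have hδ0 : (0:ℝ) ≤ δ := dist_nonneg
  have hω0 : 0 ≤ ω := ENNReal.toReal_nonneg
  have hRb : 0 ≤ Rb := (hr0 1 one_pos).trans ((hr12 1 one_pos).trans (hrB 1 one_pos))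
  have hK0 : 0 ≤ K := by positivity
  -- the min function
  set h : En n → ℝ := fun v => min (f v) (g v) with hh
  have hmin_eq : h = fun v => (f v + g v - |f v - g v|) / 2 := by
    funext v
    rcases le_total (f v) (g v) with hle | hle
    · rw [hh]; simp only [min_eq_left hle, abs_of_nonpos (sub_nonpos.2 hle)]; ring
    · rw [hh]; simp only [min_eq_right hle, abs_of_nonneg (sub_nonneg.2 hle)]; ring
  have hhint : Integrable h := by
    rw [hmin_eq]; exact ((hf.add hg).sub (hf.sub hg).abs).div_const 2
  have hmin0 : ∀ v, 0 ≤ h v := fun v => le_min (hf0 v) (hg0 v)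
  have hf0' : 0 ≤ᵐ[volume] f := ae_of_all _ hf0
  have hg0' : 0 ≤ᵐ[volume] g := ae_of_all _ hg0
  have hmin0' : 0 ≤ᵐ[volume] h := ae_of_all _ hmin0
  -- measures of superlevel sets
  set m₁ : ℝ → ℝ := fun t => (volume {v : En n | t < f v}).toReal with hm₁
  set m₂ : ℝ → ℝ := fun t => (volume {v : En n | t < g v}).toReal with hm₂
  set m₃ : ℝ → ℝ := fun t => (volume {v : En n | t < h v}).toReal with hm₃
  have hset3 : ∀ t : ℝ, {v : En n | t < h v} = {v : En n | t < f v} ∩ {v | t < g v} := by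
    intro t; ext v; simp only [hh, mem_setOf_eq, mem_inter_iff, lt_min_iff]
  -- layer cake
  have lcf : ∫ v, f v = ∫ t in Ioi (0:ℝ), m₁ t := hf.integral_eq_integral_meas_lt hf0'
  have lcg : ∫ v, g v = ∫ t in Ioi (0:ℝ), m₂ t := hg.integral_eq_integral_meas_lt hg0'
  have lch : ∫ v, h v = ∫ t in Ioi (0:ℝ), m₃ t := hhint.integral_eq_integral_meas_lt hmin0'
  have im₁ : IntegrableOn m₁ (Ioi (0:ℝ)) := integrable_meas_lt hf hf0'
  have im₂ : IntegrableOn m₂ (Ioi (0:ℝ)) := integrable_meas_lt hg hg0'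
  have im₃ : IntegrableOn m₃ (Ioi (0:ℝ)) := integrable_meas_lt hhint hmin0'
  -- step 1: pointwise identity
  have habs : ∀ v, |f v - g v| = f v + g v - 2 * h v := by
    intro v
    rcases le_total (f v) (g v) with hle | hle
    · rw [hh]; simp only [min_eq_left hle, abs_of_nonpos (sub_nonpos.2 hle)]; ring
    · rw [hh]; simp only [min_eq_right hle, abs_of_nonneg (sub_nonneg.2 hle)]; ring
  have step1 : ∫ v, |f v - g v| = (∫ v, f v) + (∫ v, g v) - 2 * ∫ v, h v := by
    have ha : Integrable (fun v : En n => f v + g v) := hf.add hg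
    have hb : Integrable (fun v : En n => 2 * h v) := hhint.const_mul 2
    simp only [habs]
    rw [integral_sub ha hb, integral_add hf hg, integral_const_mul]
  set ψ : ℝ → ℝ := fun t => m₁ t + m₂ t - 2 * m₃ t with hψ
  have iψ : IntegrableOn ψ (Ioi (0:ℝ)) := (im₁.add im₂).sub (im₃.const_mul 2)
  have step2 : (∫ v, f v) + (∫ v, g v) - 2 * ∫ v, h v = ∫ t in Ioi (0:ℝ), ψ t := by
    have ha : IntegrableOn (fun t : ℝ => m₁ t + m₂ t) (Ioi 0) := im₁.add im₂
    have hb : IntegrableOn (fun t : ℝ => 2 * m₃ t) (Ioi 0) := im₃.const_mul 2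
    rw [lcf, lcg, lch, hψ]
    rw [← integral_const_mul, ← integral_add im₁ im₂, ← integral_sub ha hb]
  -- vanishing beyond T
  have hψ0 : ∀ t : ℝ, T ≤ t → ψ t = 0 := by
    intro t ht
    have e3 : {v : En n | t < h v} = ∅ := by
      rw [hset3, hcutf t ht]; exact empty_inter _
    simp only [hψ, hm₁, hm₂, hm₃, hcutf t ht, hcutg t ht, e3, measure_empty,
      ENNReal.toReal_zero]
    ring
  -- restrict to Ioo 0 T
  have step3 : ∫ t in Ioi (0:ℝ), ψ t = ∫ t in Ioo (0:ℝ) T, ψ t := by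
    rw [← integral_indicator measurableSet_Ioi, ← integral_indicator measurableSet_Ioo]
    congr 1
    funext t
    by_cases h1 : t ∈ Ioo (0:ℝ) T
    · rw [indicator_of_mem h1, indicator_of_mem (mem_Ioi.2 h1.1)]
    · rw [indicator_of_notMem h1]
      by_cases h2 : t ∈ Ioi (0:ℝ)
      · rw [indicator_of_mem h2]
        rw [mem_Ioo, not_and] at h1
        exact hψ0 t (not_lt.mp (h1 (mem_Ioi.mp h2)))
      · rw [indicator_of_notMem h2]
  -- per-t bound on Ioo 0 T
  have hψ_bound : ∀ t ∈ Ioo (0:ℝ) T, ψ t ≤ 2 * K + (m₁ t - m₂ t) := by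
    intro t ht
    have ht0 : 0 < t := ht.1
    have hD : (volume ({v : En n | t < g v} \ {v | t < f v})).toReal ≤ K :=
      diff_bound hn (hr0 t ht0) (hr12 t ht0) (hrB t ht0) (hs1b t ht0) (hs2c t ht0)
    have hfin2 : volume {v : En n | t < g v} ≠ ⊤ := (hg.measure_gt_lt_top ht0).ne
    have hS1 : MeasurableSet {v : En n | t < f v} := measurableSet_lt measurable_const hfm
    have hsplit := measure_inter_add_diff (μ := (volume : Measure (En n))) {v : En n | t < g v} hS1
    have hfin3 : volume ({v : En n | t < g v} ∩ {v | t < f v}) ≠ ⊤ :=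
      ne_top_of_le_ne_top hfin2 (measure_mono inter_subset_left)
    have hfin4 : volume ({v : En n | t < g v} \ {v | t < f v}) ≠ ⊤ :=
      ne_top_of_le_ne_top hfin2 (measure_mono diff_subset)
    have hm2eq : m₂ t = m₃ t + (volume ({v : En n | t < g v} \ {v | t < f v})).toReal := by
      simp only [hm₂, hm₃]
      rw [hset3 t, inter_comm]
      rw [← ENNReal.toReal_add hfin3 hfin4]
      congr 1
      exact hsplit.symm
    rw [hψ]
    dsimp only
    linarith
  -- monotonicity m₂ ≤ m₁ on Ioi 0
  have hm21 : ∀ t ∈ Ioi (0:ℝ), m₂ t ≤ m₁ t := by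
    intro t ht
    rw [mem_Ioi] at ht
    have h1 : 0 ≤ r₁ t := (hr0 t ht).trans (hr12 t ht)
    have e₂ : (volume {v : En n | t < g v}).toReal = r₂ t ^ n * ω :=
      vol_sandwich_toReal hn (hr0 t ht) (hs2b t ht) (hs2c t ht)
    have e₁ : (volume {v : En n | t < f v}).toReal = r₁ t ^ n * ω :=
      vol_sandwich_toReal hn h1 (hs1b t ht) (hs1c t ht)
    rw [hm₁, hm₂]
    dsimp only
    rw [e₁, e₂]
    exact mul_le_mul_of_nonneg_right (pow_le_pow_left₀ (hr0 t ht) (hr12 t ht) n) hω0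
  -- integral comparison
  have iconst : IntegrableOn (fun _ : ℝ => 2 * K) (Ioo (0:ℝ) T) :=
    integrableOn_const measure_Ioo_lt_top.ne
  have i12 : IntegrableOn (fun t => m₁ t - m₂ t) (Ioi (0:ℝ)) := im₁.sub im₂
  have i12' : IntegrableOn (fun t => m₁ t - m₂ t) (Ioo (0:ℝ) T) :=
    i12.mono_set Ioo_subset_Ioi_self
  have step4 : ∫ t in Ioo (0:ℝ) T, ψ t ≤ ∫ t in Ioo (0:ℝ) T, (2 * K + (m₁ t - m₂ t)) := by
    apply setIntegral_mono_on (iψ.mono_set Ioo_subset_Ioi_self) (iconst.add i12')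
      measurableSet_Ioo
    exact hψ_bound
  have step5 : ∫ t in Ioo (0:ℝ) T, (2 * K + (m₁ t - m₂ t))
      = 2 * K * T + ∫ t in Ioo (0:ℝ) T, (m₁ t - m₂ t) := by
    rw [integral_add iconst i12', setIntegral_const]
    rw [measureReal_def, Real.volume_Ioo, sub_zero, ENNReal.toReal_ofReal hT, smul_eq_mul]
    ring
  have step6 : ∫ t in Ioo (0:ℝ) T, (m₁ t - m₂ t) ≤ ∫ t in Ioi (0:ℝ), (m₁ t - m₂ t) := by
    apply setIntegral_mono_set i12
    · exact (ae_restrict_iff' measurableSet_Ioi).2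
        (ae_of_all _ fun t ht => sub_nonneg.2 (hm21 t ht))
    · exact HasSubset.Subset.eventuallyLE Ioo_subset_Ioi_self
  have step7 : ∫ t in Ioi (0:ℝ), (m₁ t - m₂ t) = (∫ v, f v) - ∫ v, g v := by
    rw [integral_sub im₁ im₂, ← lcf, ← lcg]
  calc ∫ v, |f v - g v| = ∫ t in Ioo (0:ℝ) T, ψ t := by rw [step1, step2, step3]
    _ ≤ 2 * K * T + ∫ t in Ioo (0:ℝ) T, (m₁ t - m₂ t) := by rw [← step5]; exact step4
    _ ≤ 2 * K * T + ((∫ v, f v) - ∫ v, g v) := by rw [← step7]; linarith [step6]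
    _ = T * (2 * n * ω * (Rb + δ) ^ (n - 1) * δ) + ((∫ v, f v) - ∫ v, g v) := by
        rw [hK]; ring

set_option maxHeartbeats 1000000 in
lemma final_assembly {n : ℕ} (hn : 1 ≤ n) (C₀ : ℝ) (hC₀ : 0 < C₀)
    (M : ℝ → En n → En n → ℝ)
    (Rw Rb T Km : ℝ) (hRw : 0 ≤ Rw) (hRb : 0 ≤ Rb) (hT : 0 ≤ T) (hKm : 0 ≤ Km)
    (rad : ℝ → ℝ → ℝ)
    (hmeas : ∀ ρ u, 0 ≤ ρ → ρ ≤ C₀ → ‖u‖ ≤ C₀ → Measurable (M ρ u))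
    (hint : ∀ ρ u, 0 ≤ ρ → ρ ≤ C₀ → ‖u‖ ≤ C₀ → Integrable (M ρ u))
    (h0 : ∀ ρ u v, 0 ≤ ρ → ρ ≤ C₀ → ‖u‖ ≤ C₀ → 0 ≤ M ρ u v)
    (hsupp : ∀ ρ u v, 0 ≤ ρ → ρ ≤ C₀ → ‖u‖ ≤ C₀ → M ρ u v ≠ 0 → ‖v‖ ≤ Rw)
    (hmass : ∀ ρ u, 0 ≤ ρ → ρ ≤ C₀ → ‖u‖ ≤ C₀ → ∫ v, M ρ u v = Km * ρ)
    (hrad0 : ∀ ρ t, 0 ≤ ρ → ρ ≤ C₀ → 0 ≤ rad ρ t)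
    (hradmono : ∀ ρ' ρ t, 0 ≤ ρ' → ρ' ≤ ρ → ρ ≤ C₀ → rad ρ' t ≤ rad ρ t)
    (hradB : ∀ ρ t, 0 ≤ ρ → ρ ≤ C₀ → 0 < t → rad ρ t ≤ Rb)
    (hsandb : ∀ ρ u, 0 ≤ ρ → ρ ≤ C₀ → ‖u‖ ≤ C₀ → ∀ t, 0 < t →
      ball u (rad ρ t) ⊆ {v | t < M ρ u v})
    (hsandc : ∀ ρ u, 0 ≤ ρ → ρ ≤ C₀ → ‖u‖ ≤ C₀ → ∀ t, 0 < t →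
      {v | t < M ρ u v} ⊆ closedBall u (rad ρ t))
    (hcut : ∀ ρ u, 0 ≤ ρ → ρ ≤ C₀ → ‖u‖ ≤ C₀ → ∀ t, T ≤ t → {v | t < M ρ u v} = ∅) :
    ∃ C : ℝ, 0 < C ∧
      ∀ ρ₁ ρ₂ : ℝ, 0 ≤ ρ₁ → 0 ≤ ρ₂ → ∀ u₁ u₂ : En n,
        ρ₁ ≤ C₀ → ρ₂ ≤ C₀ → ‖u₁‖ ≤ C₀ → ‖u₂‖ ≤ C₀ →
          (∫ v : En n, (1 + ‖v‖ ^ 2) * |M ρ₁ u₁ v - M ρ₂ u₂ v|) ≤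
            C * (|ρ₁ - ρ₂| + ‖u₁ - u₂‖) := by
  set ω := (volume (ball (0 : En n) 1)).toReal with hω
  have hω0 : 0 ≤ ω := ENNReal.toReal_nonneg
  set E : ℝ := T * (2 * n * ω * (Rb + 2 * C₀) ^ (n - 1)) with hE
  have hE0 : 0 ≤ E := by positivity
  set W : ℝ := 1 + Rw ^ 2 with hW
  have hW1 : (1:ℝ) ≤ W := by nlinarith [sq_nonneg Rw]
  have hW0 : 0 < W := by linarith
  set C : ℝ := W * (E + Km) + 1 with hC
  have hC0 : (0:ℝ) < C := by nlinarith
  refine ⟨C, hC0, ?_⟩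
  suffices key : ∀ ρ₁ ρ₂ : ℝ, 0 ≤ ρ₁ → 0 ≤ ρ₂ → ∀ u₁ u₂ : En n,
      ρ₁ ≤ C₀ → ρ₂ ≤ C₀ → ‖u₁‖ ≤ C₀ → ‖u₂‖ ≤ C₀ → ρ₂ ≤ ρ₁ →
        (∫ v : En n, (1 + ‖v‖ ^ 2) * |M ρ₁ u₁ v - M ρ₂ u₂ v|) ≤
          C * (|ρ₁ - ρ₂| + ‖u₁ - u₂‖) by
    intro ρ₁ ρ₂ h1 h2 u₁ u₂ hb1 hb2 hu1 hu2
    rcases le_total ρ₂ ρ₁ with hle | hle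
    · exact key ρ₁ ρ₂ h1 h2 u₁ u₂ hb1 hb2 hu1 hu2 hle
    · have h' := key ρ₂ ρ₁ h2 h1 u₂ u₁ hb2 hb1 hu2 hu1 hle
      have e1 : (fun v : En n => (1 + ‖v‖ ^ 2) * |M ρ₂ u₂ v - M ρ₁ u₁ v|)
          = fun v : En n => (1 + ‖v‖ ^ 2) * |M ρ₁ u₁ v - M ρ₂ u₂ v| := by
        funext v; rw [abs_sub_comm]
      rw [e1] at h'
      rwa [abs_sub_comm ρ₂ ρ₁, norm_sub_rev u₂ u₁] at h'
  intro ρ₁ ρ₂ h1 h2 u₁ u₂ hb1 hb2 hu1 hu2 h21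
  have hfi : Integrable (M ρ₁ u₁) := hint ρ₁ u₁ h1 hb1 hu1
  have hgi : Integrable (M ρ₂ u₂) := hint ρ₂ u₂ h2 hb2 hu2
  have hstep := master hn (M ρ₁ u₁) (M ρ₂ u₂) hfi hgi (hmeas ρ₁ u₁ h1 hb1 hu1)
    (fun v => h0 ρ₁ u₁ v h1 hb1 hu1) (fun v => h0 ρ₂ u₂ v h2 hb2 hu2)
    u₁ u₂ (rad ρ₁) (rad ρ₂) Rb T hT
    (hsandb ρ₁ u₁ h1 hb1 hu1) (hsandc ρ₁ u₁ h1 hb1 hu1)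
    (hsandb ρ₂ u₂ h2 hb2 hu2) (hsandc ρ₂ u₂ h2 hb2 hu2)
    (fun t _ => hrad0 ρ₂ t h2 hb2)
    (fun t _ => hradmono ρ₂ ρ₁ t h2 h21 hb1)
    (fun t ht => hradB ρ₁ t h1 hb1 ht)
    (hcut ρ₁ u₁ h1 hb1 hu1) (hcut ρ₂ u₂ h2 hb2 hu2)
  -- weight reduction
  have hwt_pt : ∀ v : En n, (1 + ‖v‖ ^ 2) * |M ρ₁ u₁ v - M ρ₂ u₂ v|
      ≤ W * |M ρ₁ u₁ v - M ρ₂ u₂ v| := by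
    intro v
    by_cases hv : ‖v‖ ≤ Rw
    · apply mul_le_mul_of_nonneg_right _ (abs_nonneg _)
      have : ‖v‖ ^ 2 ≤ Rw ^ 2 := pow_le_pow_left₀ (norm_nonneg v) hv 2
      linarith
    · have hz1 : M ρ₁ u₁ v = 0 := by
        by_contra hne; exact hv (hsupp ρ₁ u₁ v h1 hb1 hu1 hne)
      have hz2 : M ρ₂ u₂ v = 0 := by
        by_contra hne; exact hv (hsupp ρ₂ u₂ v h2 hb2 hu2 hne)
      rw [hz1, hz2]
      simp
  have hintabs : Integrable (fun v : En n => |M ρ₁ u₁ v - M ρ₂ u₂ v|) := (hfi.sub hgi).abs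
  have hintW : Integrable (fun v : En n => W * |M ρ₁ u₁ v - M ρ₂ u₂ v|) := hintabs.const_mul W
  have hint_left : Integrable (fun v : En n => (1 + ‖v‖ ^ 2) * |M ρ₁ u₁ v - M ρ₂ u₂ v|) := by
    apply Integrable.mono hintW ?_ (ae_of_all _ ?_)
    · have hm : Measurable fun v : En n => (1 + ‖v‖ ^ 2) * |M ρ₁ u₁ v - M ρ₂ u₂ v| := by
        apply Measurable.mul
        · exact (measurable_const.add ((measurable_norm).pow measurable_const))
        · exact ((hmeas ρ₁ u₁ h1 hb1 hu1).sub (hmeas ρ₂ u₂ h2 hb2 hu2)).abs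
      exact hm.aestronglyMeasurable
    · intro v
      have hnn : (0:ℝ) ≤ (1 + ‖v‖ ^ 2) * |M ρ₁ u₁ v - M ρ₂ u₂ v| := by positivity
      have hnn2 : (0:ℝ) ≤ W * |M ρ₁ u₁ v - M ρ₂ u₂ v| := by positivity
      rw [Real.norm_eq_abs, Real.norm_eq_abs, abs_of_nonneg hnn, abs_of_nonneg hnn2]
      exact hwt_pt v
  have hδ : dist u₁ u₂ = ‖u₁ - u₂‖ := dist_eq_norm u₁ u₂
  have hδ0 : (0:ℝ) ≤ ‖u₁ - u₂‖ := norm_nonneg _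
  have hδ2C : ‖u₁ - u₂‖ ≤ 2 * C₀ := by
    calc ‖u₁ - u₂‖ ≤ ‖u₁‖ + ‖u₂‖ := norm_sub_le u₁ u₂
      _ ≤ 2 * C₀ := by linarith
  have hpow : (Rb + ‖u₁ - u₂‖) ^ (n - 1) ≤ (Rb + 2 * C₀) ^ (n - 1) :=
    pow_le_pow_left₀ (by positivity) (by linarith) _
  have hmassdiff : (∫ v, M ρ₁ u₁ v) - (∫ v, M ρ₂ u₂ v) = Km * (ρ₁ - ρ₂) := by
    rw [hmass ρ₁ u₁ h1 hb1 hu1, hmass ρ₂ u₂ h2 hb2 hu2]; ring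
  have habsρ : |ρ₁ - ρ₂| = ρ₁ - ρ₂ := abs_of_nonneg (by linarith)
  calc ∫ v : En n, (1 + ‖v‖ ^ 2) * |M ρ₁ u₁ v - M ρ₂ u₂ v|
      ≤ ∫ v : En n, W * |M ρ₁ u₁ v - M ρ₂ u₂ v| :=
        integral_mono hint_left hintW hwt_pt
    _ = W * ∫ v : En n, |M ρ₁ u₁ v - M ρ₂ u₂ v| := integral_const_mul _ _
    _ ≤ W * (T * (2 * n * ω * (Rb + ‖u₁ - u₂‖) ^ (n - 1) * ‖u₁ - u₂‖)
          + Km * (ρ₁ - ρ₂)) := by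
        apply mul_le_mul_of_nonneg_left _ hW0.le
        rw [← hmassdiff]
        rw [hδ] at hstep
        exact hstep
    _ ≤ W * (E * ‖u₁ - u₂‖ + Km * (ρ₁ - ρ₂)) := by
        apply mul_le_mul_of_nonneg_left _ hW0.le
        have : T * (2 * n * ω * (Rb + ‖u₁ - u₂‖) ^ (n - 1) * ‖u₁ - u₂‖)
            ≤ E * ‖u₁ - u₂‖ := by
          rw [hE]
          have hh : (2:ℝ) * n * ω * (Rb + ‖u₁ - u₂‖) ^ (n - 1)
              ≤ 2 * n * ω * (Rb + 2 * C₀) ^ (n - 1) :=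
            mul_le_mul_of_nonneg_left hpow (by positivity)
          calc T * (2 * n * ω * (Rb + ‖u₁ - u₂‖) ^ (n - 1) * ‖u₁ - u₂‖)
              = (T * (2 * n * ω * (Rb + ‖u₁ - u₂‖) ^ (n - 1))) * ‖u₁ - u₂‖ := by ring
            _ ≤ (T * (2 * n * ω * (Rb + 2 * C₀) ^ (n - 1))) * ‖u₁ - u₂‖ :=
                mul_le_mul_of_nonneg_right (mul_le_mul_of_nonneg_left hh hT) hδ0
        linarith
    _ ≤ C * (|ρ₁ - ρ₂| + ‖u₁ - u₂‖) := by
        rw [habsρ, hC]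
        have hWE : W * E ≤ W * (E + Km) + 1 := by nlinarith
        have hWK : W * Km ≤ W * (E + Km) + 1 := by nlinarith
        have hρΔ : (0:ℝ) ≤ ρ₁ - ρ₂ := by linarith
        nlinarith [mul_le_mul_of_nonneg_right hWE hδ0, mul_le_mul_of_nonneg_right hWK hρΔ]

-- ball/closedBall descriptions of quadratic sublevel sets
lemma hballs {n : ℕ} (c : ℝ) (u : En n) :
    ball u (Real.sqrt (max c 0)) ⊆ {v : En n | ‖v - u‖ ^ 2 < c} ∧
    {v : En n | ‖v - u‖ ^ 2 < c} ⊆ closedBall u (Real.sqrt (max c 0)) := by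
  constructor
  · intro v hv
    rw [mem_ball, dist_eq_norm] at hv
    have h2 : Real.sqrt (max c 0) ^ 2 = max c 0 := Real.sq_sqrt (le_max_right _ _)
    have h1 : ‖v - u‖ ^ 2 < max c 0 := by
      nlinarith [norm_nonneg (v - u), Real.sqrt_nonneg (max c 0)]
    rw [mem_setOf_eq]
    rcases le_or_gt c 0 with h | h
    · exfalso; rw [max_eq_right h] at h1; nlinarith [sq_nonneg ‖v - u‖]
    · rwa [max_eq_left h.le] at h1
  · intro v hv
    rw [mem_setOf_eq] at hv
    rw [mem_closedBall, dist_eq_norm]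
    have h1 : ‖v - u‖ ^ 2 ≤ max c 0 := le_trans hv.le (le_max_left _ _)
    calc ‖v - u‖ = Real.sqrt (‖v - u‖ ^ 2) := (Real.sqrt_sq (norm_nonneg _)).symm
      _ ≤ Real.sqrt (max c 0) := Real.sqrt_le_sqrt h1

lemma closedBall_eq_sublevel {n : ℕ} (u : En n) {b : ℝ} (hb : 0 ≤ b) :
    {v : En n | ‖v - u‖ ^ 2 ≤ b} = closedBall u (Real.sqrt b) := by
  ext v
  rw [mem_setOf_eq, mem_closedBall, dist_eq_norm]
  constructor
  · intro h
    calc ‖v - u‖ = Real.sqrt (‖v - u‖ ^ 2) := (Real.sqrt_sq (norm_nonneg _)).symm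
      _ ≤ Real.sqrt b := Real.sqrt_le_sqrt h
  · intro h
    calc ‖v - u‖ ^ 2 ≤ Real.sqrt b ^ 2 := pow_le_pow_left₀ (norm_nonneg _) h 2
      _ = b := Real.sq_sqrt hb

end Stmt4Aux

open Set Metric Stmt4Aux in
set_option maxHeartbeats 2000000 in
/-- Weighted stability estimate: for bounded macroscopic quantities,
`∫ (1+|v|²)|M[ρ₁,u₁] - M[ρ₂,u₂]| dv ≤ C (|ρ₁-ρ₂| + |u₁-u₂|)`. -/
theorem stmt4 (n : ℕ) (hn : 1 ≤ n) (γ κ C₀ : ℝ)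
    (hγ1 : 1 < γ) (hγ2 : γ ≤ ((n : ℝ) + 2) / n) (hκ : 0 < κ) (hC₀ : 0 < C₀) :
    ∃ C : ℝ, 0 < C ∧
      ∀ ρ₁ ρ₂ : ℝ, 0 ≤ ρ₁ → 0 ≤ ρ₂ → ∀ u₁ u₂ : En n,
        ρ₁ ≤ C₀ → ρ₂ ≤ C₀ → ‖u₁‖ ≤ C₀ → ‖u₂‖ ≤ C₀ →
          (∫ v : En n, (1 + ‖v‖ ^ 2) * |MaxwG n γ κ ρ₁ u₁ v - MaxwG n γ κ ρ₂ u₂ v|) ≤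
            C * (|ρ₁ - ρ₂| + ‖u₁ - u₂‖) := by
  have hn0 : (0:ℝ) < n := by
    have : (1:ℝ) ≤ (n:ℝ) := by exact_mod_cast hn
    linarith
  have hγ0 : (0:ℝ) < γ - 1 := sub_pos.mpr hγ1
  have hc1 : 0 < cc1 γ κ := by
    unfold cc1
    apply div_pos _ hγ0
    nlinarith
  have hγ2' : γ * n ≤ (n:ℝ) + 2 := (le_div_iff₀ hn0).mp hγ2
  have hdof0 : 0 ≤ dof n γ := by
    unfold dof
    rw [sub_nonneg, le_div_iff₀ hγ0]
    nlinarith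
  have hc2 : 0 < cc2 n γ κ := by
    have hc1' : (0:ℝ) < 2 * γ * κ / (γ - 1) := hc1
    unfold cc2
    apply div_pos
    · exact mul_pos (Real.rpow_pos_of_pos hc1' _)
        (Real.Gamma_pos_of_pos (div_pos (by linarith) hγ0))
    · exact mul_pos (Real.rpow_pos_of_pos Real.pi_pos _)
        (Real.Gamma_pos_of_pos (by linarith))
  by_cases hγf : γ = ((n : ℝ) + 2) / n
  · -- ===================== indicator case =====================
    have hexp0 : (0:ℝ) < 2 / (n:ℝ) := by positivity
    have hMeq : ∀ ρ (u v : En n), MaxwG n γ κ ρ u v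
        = if ‖v - u‖ ^ 2 ≤ cc1 γ κ * ρ ^ (2 / (n : ℝ)) then cc2 n γ κ else 0 := by
      intro ρ u v; rw [MaxwG, if_pos hγf]
    have hb0 : ∀ ρ : ℝ, 0 ≤ ρ → 0 ≤ cc1 γ κ * ρ ^ (2 / (n:ℝ)) :=
      fun ρ hρ => mul_nonneg hc1.le (Real.rpow_nonneg hρ _)
    set B0 : ℝ := cc1 γ κ * C₀ ^ (2 / (n:ℝ)) with hB0def
    have hB0 : 0 < B0 := mul_pos hc1 (Real.rpow_pos_of_pos hC₀ _)
    have hbB : ∀ ρ : ℝ, 0 ≤ ρ → ρ ≤ C₀ → cc1 γ κ * ρ ^ (2 / (n:ℝ)) ≤ B0 := by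
      intro ρ hρ hρC
      exact mul_le_mul_of_nonneg_left (Real.rpow_le_rpow hρ hρC hexp0.le) hc1.le
    have hbmono : ∀ ρ' ρ : ℝ, 0 ≤ ρ' → ρ' ≤ ρ →
        cc1 γ κ * ρ' ^ (2 / (n:ℝ)) ≤ cc1 γ κ * ρ ^ (2 / (n:ℝ)) := by
      intro ρ' ρ h1 h2
      exact mul_le_mul_of_nonneg_left (Real.rpow_le_rpow h1 h2 hexp0.le) hc1.le
    set Rb : ℝ := Real.sqrt B0 with hRbdef
    set ω := (volume (ball (0 : En n) 1)).toReal with hω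
    have hω0 : 0 ≤ ω := ENNReal.toReal_nonneg
    -- level sets
    have hlevel : ∀ ρ : ℝ, 0 ≤ ρ → ∀ (u : En n) (t : ℝ), 0 < t →
        {v : En n | t < MaxwG n γ κ ρ u v}
        = if t < cc2 n γ κ then
            closedBall u (Real.sqrt (cc1 γ κ * ρ ^ (2 / (n:ℝ)))) else ∅ := by
      intro ρ hρ u t ht
      split_ifs with htc
      · rw [← closedBall_eq_sublevel u (hb0 ρ hρ)]
        ext v
        rw [mem_setOf_eq, mem_setOf_eq, hMeq]
        by_cases hq : ‖v - u‖ ^ 2 ≤ cc1 γ κ * ρ ^ (2 / (n:ℝ))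
        · simp only [if_pos hq]
          exact ⟨fun _ => hq, fun _ => htc⟩
        · simp only [if_neg hq]
          exact ⟨fun h => absurd h (by linarith), fun h => absurd h hq⟩
      · ext v
        simp only [mem_setOf_eq, hMeq, mem_empty_iff_false, iff_false]
        intro hlt
        by_cases hq : ‖v - u‖ ^ 2 ≤ cc1 γ κ * ρ ^ (2 / (n:ℝ))
        · rw [if_pos hq] at hlt; exact htc hlt
        · rw [if_neg hq] at hlt; linarith
    -- supports
    have hsupp : ∀ ρ (u v : En n), 0 ≤ ρ → ρ ≤ C₀ → ‖u‖ ≤ C₀ →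
        MaxwG n γ κ ρ u v ≠ 0 → ‖v‖ ≤ C₀ + Rb := by
      intro ρ u v hρ hρC hu hne
      rw [hMeq] at hne
      by_cases hq : ‖v - u‖ ^ 2 ≤ cc1 γ κ * ρ ^ (2 / (n:ℝ))
      · have h2 : ‖v - u‖ ^ 2 ≤ B0 := le_trans hq (hbB ρ hρ hρC)
        have h3 : ‖v - u‖ ≤ Rb := by
          calc ‖v - u‖ = Real.sqrt (‖v - u‖ ^ 2) := (Real.sqrt_sq (norm_nonneg _)).symm
            _ ≤ Real.sqrt B0 := Real.sqrt_le_sqrt h2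
        calc ‖v‖ = ‖v - u + u‖ := by rw [sub_add_cancel]
          _ ≤ ‖v - u‖ + ‖u‖ := norm_add_le _ _
          _ ≤ C₀ + Rb := by linarith
      · rw [if_neg hq] at hne; exact absurd rfl hne
    -- function as indicator
    have hfeq : ∀ ρ : ℝ, 0 ≤ ρ → ∀ u : En n, (fun v : En n => MaxwG n γ κ ρ u v)
        = (closedBall u (Real.sqrt (cc1 γ κ * ρ ^ (2 / (n:ℝ))))).indicator
            (fun _ => cc2 n γ κ) := by
      intro ρ hρ u
      funext v
      rw [hMeq, ← closedBall_eq_sublevel u (hb0 ρ hρ)]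
      by_cases hq : ‖v - u‖ ^ 2 ≤ cc1 γ κ * ρ ^ (2 / (n:ℝ))
      · rw [if_pos hq, indicator_of_mem (mem_setOf_eq ▸ hq)]
      · rw [if_neg hq, indicator_of_notMem]
        exact fun h => hq h
    -- mass
    have hrn : ∀ ρ : ℝ, 0 ≤ ρ →
        (Real.sqrt (cc1 γ κ * ρ ^ (2 / (n:ℝ)))) ^ n = cc1 γ κ ^ ((n:ℝ) / 2) * ρ := by
      intro ρ hρ
      have hb := hb0 ρ hρ
      rw [Real.sqrt_eq_rpow, ← Real.rpow_natCast ((cc1 γ κ * ρ ^ (2/(n:ℝ))) ^ ((1:ℝ)/2)) n,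
        ← Real.rpow_mul hb]
      rw [show (1/2:ℝ) * (n:ℕ) = (n:ℝ)/2 by push_cast; ring]
      rw [Real.mul_rpow hc1.le (Real.rpow_nonneg hρ _), ← Real.rpow_mul hρ]
      rw [show (2/(n:ℝ)) * ((n:ℝ)/2) = 1 by field_simp, Real.rpow_one]
    set Km : ℝ := cc2 n γ κ * (cc1 γ κ ^ ((n:ℝ)/2) * ω) with hKmdef
    have hKm0 : 0 ≤ Km := by
      apply mul_nonneg hc2.le (mul_nonneg (Real.rpow_nonneg hc1.le _) hω0)
    have hmass : ∀ ρ : ℝ, ∀ u : En n, 0 ≤ ρ → ρ ≤ C₀ → ‖u‖ ≤ C₀ →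
        (∫ v, MaxwG n γ κ ρ u v) = Km * ρ := by
      intro ρ u hρ _ _
      rw [hfeq ρ hρ u, integral_indicator measurableSet_closedBall, setIntegral_const]
      have hvol : (volume (closedBall u (Real.sqrt (cc1 γ κ * ρ ^ (2/(n:ℝ)))))).toReal
          = (Real.sqrt (cc1 γ κ * ρ ^ (2/(n:ℝ)))) ^ n * ω :=
        vol_sandwich_toReal hn (Real.sqrt_nonneg _) ball_subset_closedBall (subset_refl _)
      rw [measureReal_def, hvol, hrn ρ hρ, smul_eq_mul, hKmdef]
      ring
    -- measurability / integrability / nonnegativity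
    have hmeas : ∀ ρ : ℝ, ∀ u : En n, 0 ≤ ρ → ρ ≤ C₀ → ‖u‖ ≤ C₀ →
        Measurable (fun v : En n => MaxwG n γ κ ρ u v) := by
      intro ρ u _ _ _
      have : (fun v : En n => MaxwG n γ κ ρ u v)
          = fun v => if ‖v - u‖ ^ 2 ≤ cc1 γ κ * ρ ^ (2/(n:ℝ)) then cc2 n γ κ else 0 :=
        funext fun v => hMeq ρ u v
      rw [this]
      apply Measurable.ite _ measurable_const measurable_const
      exact measurableSet_le
        (((continuous_id.sub continuous_const).norm.pow 2).measurable) measurable_const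
    have hint : ∀ ρ : ℝ, ∀ u : En n, 0 ≤ ρ → ρ ≤ C₀ → ‖u‖ ≤ C₀ →
        Integrable (fun v : En n => MaxwG n γ κ ρ u v) := by
      intro ρ u hρ _ _
      rw [hfeq ρ hρ u]
      rw [integrable_indicator_iff measurableSet_closedBall]
      exact integrableOn_const measure_closedBall_lt_top.ne
    have h0 : ∀ ρ : ℝ, ∀ u v : En n, 0 ≤ ρ → ρ ≤ C₀ → ‖u‖ ≤ C₀ →
        0 ≤ MaxwG n γ κ ρ u v := by
      intro ρ u v _ _ _
      rw [hMeq]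
      split_ifs
      · exact hc2.le
      · exact le_refl 0
    -- radii
    set rad : ℝ → ℝ → ℝ := fun ρ t =>
      if t < cc2 n γ κ then Real.sqrt (cc1 γ κ * ρ ^ (2 / (n:ℝ))) else 0 with hraddef
    have hrad0 : ∀ ρ t : ℝ, 0 ≤ ρ → ρ ≤ C₀ → 0 ≤ rad ρ t := by
      intro ρ t _ _
      rw [hraddef]
      dsimp only
      split_ifs
      · exact Real.sqrt_nonneg _
      · exact le_refl 0
    have hradmono : ∀ ρ' ρ t : ℝ, 0 ≤ ρ' → ρ' ≤ ρ → ρ ≤ C₀ → rad ρ' t ≤ rad ρ t := by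
      intro ρ' ρ t h1 h2 _
      rw [hraddef]; dsimp only
      split_ifs
      · exact Real.sqrt_le_sqrt (hbmono ρ' ρ h1 h2)
      · exact le_refl 0
    have hradB : ∀ ρ t : ℝ, 0 ≤ ρ → ρ ≤ C₀ → 0 < t → rad ρ t ≤ Rb := by
      intro ρ t hρ hρC _
      rw [hraddef]; dsimp only
      split_ifs
      · exact Real.sqrt_le_sqrt (hbB ρ hρ hρC)
      · exact Real.sqrt_nonneg _
    have hsandb : ∀ ρ : ℝ, ∀ u : En n, 0 ≤ ρ → ρ ≤ C₀ → ‖u‖ ≤ C₀ → ∀ t, 0 < t →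
        ball u (rad ρ t) ⊆ {v | t < MaxwG n γ κ ρ u v} := by
      intro ρ u hρ hρC _ t ht
      rw [hlevel ρ hρ u t ht, hraddef]
      dsimp only
      split_ifs
      · exact ball_subset_closedBall
      · intro v hv
        exact absurd (mem_ball.mp hv) (not_lt.mpr dist_nonneg)
    have hsandc : ∀ ρ : ℝ, ∀ u : En n, 0 ≤ ρ → ρ ≤ C₀ → ‖u‖ ≤ C₀ → ∀ t, 0 < t →
        {v | t < MaxwG n γ κ ρ u v} ⊆ closedBall u (rad ρ t) := by
      intro ρ u hρ hρC _ t ht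
      rw [hlevel ρ hρ u t ht, hraddef]
      dsimp only
      split_ifs
      · exact subset_refl _
      · exact empty_subset _
    have hcut : ∀ ρ : ℝ, ∀ u : En n, 0 ≤ ρ → ρ ≤ C₀ → ‖u‖ ≤ C₀ → ∀ t : ℝ,
        cc2 n γ κ ≤ t → {v | t < MaxwG n γ κ ρ u v} = ∅ := by
      intro ρ u hρ _ _ t ht
      have ht0 : 0 < t := lt_of_lt_of_le hc2 ht
      rw [hlevel ρ hρ u t ht0, if_neg (not_lt.mpr ht)]
    exact final_assembly hn C₀ hC₀ (fun ρ u v => MaxwG n γ κ ρ u v)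
      (C₀ + Rb) Rb (cc2 n γ κ) Km
      (by positivity) (Real.sqrt_nonneg _) hc2.le hKm0 rad
      (fun ρ u a b c => hmeas ρ u a b c) (fun ρ u a b c => hint ρ u a b c)
      (fun ρ u v a b c => h0 ρ u v a b c) (fun ρ u v a b c => hsupp ρ u v a b c)
      (fun ρ u a b c => hmass ρ u a b c)
      (fun ρ t a b => hrad0 ρ t a b) (fun ρ' ρ t a b c => hradmono ρ' ρ t a b c)
      (fun ρ t a b c => hradB ρ t a b c)
      (fun ρ u a b c => hsandb ρ u a b c) (fun ρ u a b c => hsandc ρ u a b c)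
      (fun ρ u a b c => hcut ρ u a b c)
  · -- ===================== generic case =====================
    have hγlt : γ < ((n:ℝ) + 2) / n := lt_of_le_of_ne hγ2 hγf
    have hγlt' : γ * n < (n:ℝ) + 2 := (lt_div_iff₀ hn0).mp hγlt
    have hdpos : 0 < dof n γ := by
      unfold dof
      rw [sub_pos, lt_div_iff₀ hγ0]
      nlinarith
    set p : ℝ := dof n γ / 2 with hpdef
    have hp : 0 < p := by rw [hpdef]; linarith
    have hMeq : ∀ ρ (u v : En n), MaxwG n γ κ ρ u v
        = cc2 n γ κ * (max (cc1 γ κ * ρ ^ (γ - 1) - ‖v - u‖ ^ 2) 0) ^ p := by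
      intro ρ u v; rw [MaxwG, if_neg hγf, hpdef]
    set A0 : ℝ := cc1 γ κ * C₀ ^ (γ - 1) with hA0def
    have hA0 : 0 < A0 := mul_pos hc1 (Real.rpow_pos_of_pos hC₀ _)
    have haC : ∀ ρ : ℝ, 0 ≤ ρ → ρ ≤ C₀ → cc1 γ κ * ρ ^ (γ - 1) ≤ A0 := by
      intro ρ hρ hρC
      exact mul_le_mul_of_nonneg_left (Real.rpow_le_rpow hρ hρC hγ0.le) hc1.le
    have hamono : ∀ ρ' ρ : ℝ, 0 ≤ ρ' → ρ' ≤ ρ →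
        cc1 γ κ * ρ' ^ (γ - 1) ≤ cc1 γ κ * ρ ^ (γ - 1) := by
      intro ρ' ρ h1 h2
      exact mul_le_mul_of_nonneg_left (Real.rpow_le_rpow h1 h2 hγ0.le) hc1.le
    have ha0 : ∀ ρ : ℝ, 0 ≤ ρ → 0 ≤ cc1 γ κ * ρ ^ (γ - 1) :=
      fun ρ hρ => mul_nonneg hc1.le (Real.rpow_nonneg hρ _)
    set Rb : ℝ := Real.sqrt A0 with hRbdef
    set T : ℝ := cc2 n γ κ * A0 ^ p + 1 with hTdef
    have hT0 : 0 ≤ T := by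
      rw [hTdef]
      have := mul_nonneg hc2.le (Real.rpow_nonneg hA0.le p)
      linarith
    -- continuity, measurability, integrability
    have hcont : ∀ ρ : ℝ, ∀ u : En n, Continuous (fun v : En n => MaxwG n γ κ ρ u v) := by
      intro ρ u
      have heq : (fun v : En n => MaxwG n γ κ ρ u v)
          = fun v => cc2 n γ κ * (max (cc1 γ κ * ρ ^ (γ - 1) - ‖v - u‖ ^ 2) 0) ^ p :=
        funext fun v => hMeq ρ u v
      rw [heq]
      apply continuous_const.mul
      apply Continuous.rpow_const
      · exact (continuous_const.sub
          (((continuous_id.sub continuous_const).norm).pow 2)).max continuous_const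
      · exact fun v => Or.inr hp.le
    have hsupp : ∀ ρ : ℝ, ∀ u v : En n, 0 ≤ ρ → ρ ≤ C₀ → ‖u‖ ≤ C₀ →
        MaxwG n γ κ ρ u v ≠ 0 → ‖v‖ ≤ C₀ + Rb := by
      intro ρ u v hρ hρC hu hne
      rw [hMeq] at hne
      have hx : max (cc1 γ κ * ρ ^ (γ - 1) - ‖v - u‖ ^ 2) 0 ≠ 0 := by
        intro h
        rw [h, Real.zero_rpow hp.ne', mul_zero] at hne
        exact hne rfl
      have hpos : 0 < cc1 γ κ * ρ ^ (γ - 1) - ‖v - u‖ ^ 2 := by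
        by_contra hle
        push_neg at hle
        exact hx (max_eq_right hle)
      have h2 : ‖v - u‖ ^ 2 ≤ A0 := by nlinarith [haC ρ hρ hρC, sq_nonneg ‖v - u‖]
      have h3 : ‖v - u‖ ≤ Rb := by
        calc ‖v - u‖ = Real.sqrt (‖v - u‖ ^ 2) := (Real.sqrt_sq (norm_nonneg _)).symm
          _ ≤ Real.sqrt A0 := Real.sqrt_le_sqrt h2
      calc ‖v‖ = ‖v - u + u‖ := by rw [sub_add_cancel]
        _ ≤ ‖v - u‖ + ‖u‖ := norm_add_le _ _
        _ ≤ C₀ + Rb := by linarith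
    have hint : ∀ ρ : ℝ, ∀ u : En n, 0 ≤ ρ → ρ ≤ C₀ → ‖u‖ ≤ C₀ →
        Integrable (fun v : En n => MaxwG n γ κ ρ u v) := by
      intro ρ u hρ hρC hu
      apply (hcont ρ u).integrable_of_hasCompactSupport
      apply HasCompactSupport.intro (isCompact_closedBall (0 : En n) (C₀ + Rb))
      intro v hv
      by_contra hne
      exact hv (mem_closedBall_zero_iff.mpr (hsupp ρ u v hρ hρC hu hne))
    have h0 : ∀ ρ : ℝ, ∀ u v : En n, 0 ≤ ρ → ρ ≤ C₀ → ‖u‖ ≤ C₀ →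
        0 ≤ MaxwG n γ κ ρ u v := by
      intro ρ u v _ _ _
      rw [hMeq]
      exact mul_nonneg hc2.le (Real.rpow_nonneg (le_max_right _ _) _)
    -- level sets
    have hlevel : ∀ ρ : ℝ, ∀ (u : En n) (t : ℝ), 0 < t →
        {v : En n | t < MaxwG n γ κ ρ u v}
        = {v : En n | ‖v - u‖ ^ 2 < cc1 γ κ * ρ ^ (γ - 1) - (t / cc2 n γ κ) ^ p⁻¹} := by
      intro ρ u t ht
      have hsp : ((t / cc2 n γ κ) ^ p⁻¹) ^ p = t / cc2 n γ κ :=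
        Real.rpow_inv_rpow (div_nonneg ht.le hc2.le) hp.ne'
      have hs0 : 0 < (t / cc2 n γ κ) ^ p⁻¹ := Real.rpow_pos_of_pos (div_pos ht hc2) _
      ext v
      simp only [mem_setOf_eq, hMeq]
      have hx0 : (0:ℝ) ≤ max (cc1 γ κ * ρ ^ (γ - 1) - ‖v - u‖ ^ 2) 0 := le_max_right _ _
      constructor
      · intro hlt
        have h1 : ((t / cc2 n γ κ) ^ p⁻¹) ^ p
            < (max (cc1 γ κ * ρ ^ (γ - 1) - ‖v - u‖ ^ 2) 0) ^ p := by
          rw [hsp, div_lt_iff₀ hc2, mul_comm]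
          exact hlt
        have h2 := (Real.rpow_lt_rpow_iff hs0.le hx0 hp).mp h1
        rcases lt_max_iff.mp h2 with h3 | h3
        · linarith
        · linarith
      · intro hlt
        have h2 : (t / cc2 n γ κ) ^ p⁻¹
            < max (cc1 γ κ * ρ ^ (γ - 1) - ‖v - u‖ ^ 2) 0 :=
          lt_max_iff.mpr (Or.inl (by linarith))
        have h1 := Real.rpow_lt_rpow hs0.le h2 hp
        rw [hsp, div_lt_iff₀ hc2, mul_comm] at h1
        exact h1
    -- radii
    set rad : ℝ → ℝ → ℝ := fun ρ t =>
      Real.sqrt (max (cc1 γ κ * ρ ^ (γ - 1) - (t / cc2 n γ κ) ^ p⁻¹) 0) with hraddef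
    have hrad0 : ∀ ρ t : ℝ, 0 ≤ ρ → ρ ≤ C₀ → 0 ≤ rad ρ t := by
      intro ρ t _ _
      exact Real.sqrt_nonneg _
    have hradmono : ∀ ρ' ρ t : ℝ, 0 ≤ ρ' → ρ' ≤ ρ → ρ ≤ C₀ → rad ρ' t ≤ rad ρ t := by
      intro ρ' ρ t h1 h2 _
      apply Real.sqrt_le_sqrt
      exact max_le_max (sub_le_sub_right (hamono ρ' ρ h1 h2) _) (le_refl 0)
    have hradB : ∀ ρ t : ℝ, 0 ≤ ρ → ρ ≤ C₀ → 0 < t → rad ρ t ≤ Rb := by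
      intro ρ t hρ hρC ht
      rw [hRbdef]
      apply Real.sqrt_le_sqrt
      apply max_le _ hA0.le
      have hs0 : 0 ≤ (t / cc2 n γ κ) ^ p⁻¹ := Real.rpow_nonneg (div_nonneg ht.le hc2.le) _
      linarith [haC ρ hρ hρC]
    have hsandb : ∀ ρ : ℝ, ∀ u : En n, 0 ≤ ρ → ρ ≤ C₀ → ‖u‖ ≤ C₀ → ∀ t, 0 < t →
        ball u (rad ρ t) ⊆ {v | t < MaxwG n γ κ ρ u v} := by
      intro ρ u _ _ _ t ht
      rw [hlevel ρ u t ht]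
      exact (hballs _ u).1
    have hsandc : ∀ ρ : ℝ, ∀ u : En n, 0 ≤ ρ → ρ ≤ C₀ → ‖u‖ ≤ C₀ → ∀ t, 0 < t →
        {v | t < MaxwG n γ κ ρ u v} ⊆ closedBall u (rad ρ t) := by
      intro ρ u _ _ _ t ht
      rw [hlevel ρ u t ht]
      exact (hballs _ u).2
    have hcut : ∀ ρ : ℝ, ∀ u : En n, 0 ≤ ρ → ρ ≤ C₀ → ‖u‖ ≤ C₀ → ∀ t : ℝ,
        T ≤ t → {v | t < MaxwG n γ κ ρ u v} = ∅ := by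
      intro ρ u hρ hρC _ t ht
      apply eq_empty_iff_forall_notMem.mpr
      intro v hv
      rw [mem_setOf_eq, hMeq] at hv
      have hle : MaxwG n γ κ ρ u v ≤ cc2 n γ κ * A0 ^ p := by
        rw [hMeq]
        apply mul_le_mul_of_nonneg_left _ hc2.le
        apply Real.rpow_le_rpow (le_max_right _ _) _ hp.le
        apply max_le _ hA0.le
        nlinarith [haC ρ hρ hρC, sq_nonneg ‖v - u‖]
      rw [← hMeq] at hv
      rw [hTdef] at ht
      linarith
    -- mass
    set I₁ : ℝ := ∫ w : En n, (max (1 - ‖w‖ ^ 2) 0) ^ p with hI₁def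
    have hI₁0 : 0 ≤ I₁ := by
      rw [hI₁def]
      exact integral_nonneg fun w => Real.rpow_nonneg (le_max_right _ _) _
    set Km : ℝ := cc2 n γ κ * (cc1 γ κ ^ (1 / (γ - 1)) * I₁) with hKmdef
    have hKm0 : 0 ≤ Km :=
      mul_nonneg hc2.le (mul_nonneg (Real.rpow_nonneg hc1.le _) hI₁0)
    have hmass : ∀ ρ : ℝ, ∀ u : En n, 0 ≤ ρ → ρ ≤ C₀ → ‖u‖ ≤ C₀ →
        (∫ v, MaxwG n γ κ ρ u v) = Km * ρ := by
      intro ρ u hρ _ _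
      rcases hρ.eq_or_lt with hρ0 | hρ0
      · have hz : ∀ v : En n, MaxwG n γ κ ρ u v = 0 := by
          intro v
          rw [hMeq, ← hρ0, Real.zero_rpow hγ0.ne', mul_zero, zero_sub,
            max_eq_right (neg_nonpos.mpr (sq_nonneg _)), Real.zero_rpow hp.ne', mul_zero]
        simp only [hz, integral_zero]
        rw [← hρ0, mul_zero]
      · set a : ℝ := cc1 γ κ * ρ ^ (γ - 1) with hadef
        have ha : 0 < a := mul_pos hc1 (Real.rpow_pos_of_pos hρ0 _)
        have h1 : (∫ v, MaxwG n γ κ ρ u v)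
            = ∫ v, (fun w : En n => cc2 n γ κ * (max (a - ‖w‖ ^ 2) 0) ^ p) (v - u) :=
          integral_congr_ae (ae_of_all _ fun v => hMeq ρ u v)
        have h2 : (∫ v, (fun w : En n => cc2 n γ κ * (max (a - ‖w‖ ^ 2) 0) ^ p) (v - u))
            = ∫ w : En n, cc2 n γ κ * (max (a - ‖w‖ ^ 2) 0) ^ p :=
          integral_sub_right_eq_self (μ := (volume : Measure (En n)))
            (fun w : En n => cc2 n γ κ * (max (a - ‖w‖ ^ 2) 0) ^ p) u
        set R : ℝ := Real.sqrt a with hRdef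
        have hR : 0 < R := Real.sqrt_pos.mpr ha
        have hRn : (0:ℝ) < R ^ n := pow_pos hR n
        have hcs := Measure.integral_comp_smul (volume : Measure (En n))
          (fun w : En n => cc2 n γ κ * (max (a - ‖w‖ ^ 2) 0) ^ p) R
        rw [finrank_euclideanSpace_fin] at hcs
        have h4 : ∀ x : En n, cc2 n γ κ * (max (a - ‖R • x‖ ^ 2) 0) ^ p
            = (cc2 n γ κ * a ^ p) * (max (1 - ‖x‖ ^ 2) 0) ^ p := by
          intro x
          have hn2 : ‖R • x‖ ^ 2 = a * ‖x‖ ^ 2 := by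
            rw [norm_smul, Real.norm_eq_abs, abs_of_pos hR, mul_pow, hRdef,
              Real.sq_sqrt ha.le]
          have hmax : max (a - ‖R • x‖ ^ 2) 0 = a * max (1 - ‖x‖ ^ 2) 0 := by
            rw [hn2, mul_max_of_nonneg _ _ ha.le, mul_zero, mul_sub, mul_one]
          rw [hmax, Real.mul_rpow ha.le (le_max_right _ _)]
          ring
        have h5 : (cc2 n γ κ * a ^ p) * I₁
            = |(R ^ n)⁻¹| * ∫ w : En n, cc2 n γ κ * (max (a - ‖w‖ ^ 2) 0) ^ p := by
          have h5' := hcs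
          simp only [h4] at h5'
          rw [integral_const_mul, smul_eq_mul, ← hI₁def] at h5'
          exact h5'
        have h6 : (∫ w : En n, cc2 n γ κ * (max (a - ‖w‖ ^ 2) 0) ^ p)
            = R ^ n * (cc2 n γ κ * a ^ p * I₁) := by
          have h7 := congrArg (fun z : ℝ => R ^ n * z) h5
          rw [abs_of_pos (inv_pos.mpr hRn), ← mul_assoc (R ^ n) ((R ^ n)⁻¹), mul_inv_cancel₀ hRn.ne',
            one_mul] at h7
          exact h7.symm
        have h8 : R ^ n * a ^ p = cc1 γ κ ^ (1 / (γ - 1)) * ρ := by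
          have hRn2 : R ^ n = a ^ ((n:ℝ) / 2) := by
            rw [hRdef, Real.sqrt_eq_rpow, ← Real.rpow_natCast (a ^ ((1:ℝ)/2)) n,
              ← Real.rpow_mul ha.le]
            congr 1
            push_cast
            ring
          rw [hRn2, ← Real.rpow_add ha]
          have hexpeq : (n:ℝ)/2 + p = 1/(γ-1) := by
            rw [hpdef]
            unfold dof
            field_simp
            ring
          rw [hexpeq, hadef, Real.mul_rpow hc1.le (Real.rpow_nonneg hρ _)]
          rw [← Real.rpow_mul hρ]
          rw [mul_one_div_cancel (ne_of_gt hγ0), Real.rpow_one]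
        rw [h1, h2, h6, hKmdef]
        calc R ^ n * (cc2 n γ κ * a ^ p * I₁)
            = (R ^ n * a ^ p) * (cc2 n γ κ * I₁) := by ring
          _ = (cc1 γ κ ^ (1/(γ-1)) * ρ) * (cc2 n γ κ * I₁) := by rw [h8]
          _ = cc2 n γ κ * (cc1 γ κ ^ (1/(γ-1)) * I₁) * ρ := by ring
    exact final_assembly hn C₀ hC₀ (fun ρ u v => MaxwG n γ κ ρ u v)
      (C₀ + Rb) Rb T Km
      (by positivity) (Real.sqrt_nonneg _) hT0 hKm0 rad
      (fun ρ u a b c => (hcont ρ u).measurable) (fun ρ u a b c => hint ρ u a b c)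
      (fun ρ u v a b c => h0 ρ u v a b c) (fun ρ u v a b c => hsupp ρ u v a b c)
      (fun ρ u a b c => hmass ρ u a b c)
      (fun ρ t a b => hrad0 ρ t a b) (fun ρ' ρ t a b c => hradmono ρ' ρ t a b c)
      (fun ρ t a b c => hradB ρ t a b c)
      (fun ρ u a b c => hsandb ρ u a b c) (fun ρ u a b c => hsandc ρ u a b c)
      (fun ρ u a b c => hcut ρ u a b c)
end
end

section
/- Let n ≥ 1 be an integer, r > 0 and 𝐜₁, 𝐜₂ ∈ ℝⁿ. Then the Lebesgue measure of the symmetric difference of the closed balls of radius r centered at 𝐜₁ and 𝐜₂ satisfies vol( B_r(𝐜₁) △ B_r(𝐜₂) ) ≤ 2 ω_{n−1} r^{n−1} |𝐜₁ − 𝐜₂|, where ω_{n−1} denotes the Lebesgue measure of the unit ball in ℝ^{n−1}, with the convention ω₀ = 1. -/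
open MeasureTheory Set

lemma sq_set_eq_Icc (α s2 : ℝ) (h : 0 ≤ s2) :
    {t : ℝ | (t - α)^2 ≤ s2} = Icc (α - Real.sqrt s2) (α + Real.sqrt s2) := by
  ext t
  simp only [mem_setOf_eq, mem_Icc]
  constructor
  · intro ht
    have := Real.abs_le_sqrt ht
    rw [abs_le] at this
    exact ⟨by linarith [this.1], by linarith [this.2]⟩
  · rintro ⟨h1, h2⟩
    have habs : |t - α| ≤ Real.sqrt s2 := abs_le.2 ⟨by linarith, by linarith⟩
    calc (t - α)^2 = |t - α|^2 := (sq_abs _).symm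
    _ ≤ (Real.sqrt s2)^2 := pow_le_pow_left₀ (abs_nonneg _) habs 2
    _ = s2 := Real.sq_sqrt h

lemma symmDiff_Icc_vol (a b d : ℝ) (hd : 0 ≤ d) :
    volume (symmDiff (Icc a b) (Icc (a + d) (b + d))) ≤ ENNReal.ofReal (2 * d) := by
  have h1 : Icc a b \ Icc (a + d) (b + d) ⊆ Icc a (a + d) := by
    rintro t ⟨⟨ht1, ht2⟩, ht3⟩
    refine ⟨ht1, ?_⟩
    by_contra hc
    push_neg at hc
    exact ht3 ⟨hc.le, by linarith⟩
  have h2 : Icc (a + d) (b + d) \ Icc a b ⊆ Icc b (b + d) := by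
    rintro t ⟨⟨ht1, ht2⟩, ht3⟩
    refine ⟨?_, ht2⟩
    by_contra hc
    push_neg at hc
    exact ht3 ⟨by linarith, hc.le⟩
  calc volume (symmDiff (Icc a b) (Icc (a + d) (b + d)))
      ≤ volume (Icc a (a + d) ∪ Icc b (b + d)) := by
        apply measure_mono
        rw [Set.symmDiff_def]
        exact Set.union_subset_union h1 h2
    _ ≤ volume (Icc a (a + d)) + volume (Icc b (b + d)) := measure_union_le _ _
    _ = ENNReal.ofReal d + ENNReal.ofReal d := by
        rw [Real.volume_Icc, Real.volume_Icc, add_sub_cancel_left, add_sub_cancel_left]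
    _ = ENNReal.ofReal (2 * d) := by
        rw [two_mul, ENNReal.ofReal_add hd hd]

set_option maxHeartbeats 1000000 in
/-- Lemma 2.1: the Lebesgue measure of the symmetric difference of two closed balls
of the same radius `r` is at most `2 ω_{n-1} r^{n-1} |c₁ - c₂|`, where `ω_{n-1}` is the
Lebesgue measure of the unit ball in `ℝ^{n-1}` (with `ω₀ = 1`, which is the measure of
the unit ball in the zero-dimensional space). -/
theorem stmt5 (n : ℕ) (hn : 1 ≤ n) (r : ℝ) (hr : 0 < r)
    (c₁ c₂ : EuclideanSpace ℝ (Fin n)) :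
    volume (symmDiff (Metric.closedBall c₁ r) (Metric.closedBall c₂ r)) ≤
      ENNReal.ofReal
        (2 * (volume (Metric.closedBall (0 : EuclideanSpace ℝ (Fin (n - 1))) 1)).toReal *
          r ^ (n - 1) * dist c₁ c₂) := by
  obtain ⟨m, rfl⟩ : ∃ m, n = m + 1 := ⟨n - 1, (Nat.succ_pred_eq_of_pos hn).symm⟩
  simp only [Nat.add_sub_cancel]
  rcases eq_or_ne c₁ c₂ with rfl | hne
  · simp [symmDiff_self]
  set d : ℝ := dist c₁ c₂ with hd
  have hd0 : 0 < d := dist_pos.2 hne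
  set u : EuclideanSpace ℝ (Fin (m + 1)) := c₂ - c₁ with hu_def
  have hu : ‖u‖ = d := by rw [hu_def, ← dist_eq_norm, dist_comm]
  -- orthonormal basis adapted to u
  have hunit : ‖(d⁻¹ • u : EuclideanSpace ℝ (Fin (m+1)))‖ = 1 := by
    rw [norm_smul, hu, norm_inv, Real.norm_eq_abs, abs_of_pos hd0,
      inv_mul_cancel₀ hd0.ne']
  have horth : Orthonormal ℝ
      (Set.restrict ({0} : Set (Fin (m+1))) (fun _ => (d⁻¹ • u : EuclideanSpace ℝ (Fin (m+1))))) := by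
    refine ⟨fun i => hunit, fun i j hij => absurd (Subsingleton.elim i j) hij⟩
  obtain ⟨b, hb0⟩ := horth.exists_orthonormalBasis_extension_of_card_eq
    (by simp [finrank_euclideanSpace_fin])
  have hb : b 0 = d⁻¹ • u := hb0 0 rfl
  set L := b.repr with hL
  have hLu : L u = d • EuclideanSpace.single (0 : Fin (m+1)) 1 := by
    have h1 : u = d • b 0 := by
      rw [hb, smul_smul, mul_inv_cancel₀ hd0.ne', one_smul]
    rw [h1, _root_.map_smul, b.repr_self]
  -- transfer via the isometry L
  have hmeas : MeasurableSet
      (symmDiff (Metric.closedBall (L c₁) r) (Metric.closedBall (L c₂) r)) := by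
    rw [Set.symmDiff_def]
    exact (measurableSet_closedBall.diff measurableSet_closedBall).union
      (measurableSet_closedBall.diff measurableSet_closedBall)
  have key1 : volume (symmDiff (Metric.closedBall c₁ r) (Metric.closedBall c₂ r))
      = volume (symmDiff (Metric.closedBall (L c₁) r) (Metric.closedBall (L c₂) r)) := by
    rw [← (L.measurePreserving.measure_preimage hmeas.nullMeasurableSet)]
    congr 1
    rw [Set.preimage_symmDiff]
    congr 1 <;> · ext x; simp [Metric.mem_closedBall, L.dist_map]
  have hLc2 : L c₂ = L c₁ + d • EuclideanSpace.single (0 : Fin (m+1)) 1 := by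
    have : c₂ = c₁ + u := by rw [hu_def]; abel
    rw [this, map_add, hLu]
  set a : EuclideanSpace ℝ (Fin (m+1)) := L c₁ with ha
  set v : EuclideanSpace ℝ (Fin (m+1)) := a + d • EuclideanSpace.single (0 : Fin (m+1)) 1 with hv
  rw [key1, hLc2]
  -- transfer to ℝ × (Fin m → ℝ)
  set G : EuclideanSpace ℝ (Fin (m+1)) ≃ᵐ ℝ × (Fin m → ℝ) :=
    (MeasurableEquiv.toLp 2 (Fin (m+1) → ℝ)).symm.trans
      (MeasurableEquiv.piFinSuccAbove (fun _ => ℝ) 0) with hG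
  have hMPG : MeasurePreserving G volume volume :=
    (volume_preserving_piFinSuccAbove (fun _ : Fin (m+1) => ℝ) 0).comp
      (EuclideanSpace.volume_preserving_symm_measurableEquiv_toLp (Fin (m+1)))
  have hcoord : ∀ (x : ℝ × (Fin m → ℝ)) (i : Fin (m+1)),
      (G.symm x : EuclideanSpace ℝ (Fin (m+1))) i = Fin.insertNth (α := fun _ : Fin (m+1) => ℝ) 0 x.1 x.2 i := by
    intro x i; rfl
  have hmeas2 : MeasurableSet
      (symmDiff (Metric.closedBall a r)
        (Metric.closedBall (v) r)) := by
    rw [Set.symmDiff_def]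
    exact (measurableSet_closedBall.diff measurableSet_closedBall).union
      (measurableSet_closedBall.diff measurableSet_closedBall)
  have key2 : volume (symmDiff (Metric.closedBall a r)
        (Metric.closedBall (v) r))
      = volume (G.symm ⁻¹' (symmDiff (Metric.closedBall a r)
        (Metric.closedBall (v) r))) :=
    ((hMPG.symm G).measure_preimage hmeas2.nullMeasurableSet).symm
  rw [key2]
  -- describe the preimages of the two balls
  set q : (Fin m → ℝ) → ℝ :=
    fun y => ∑ j, (y j - a ((0 : Fin (m+1)).succAbove j))^2 with hq
  have hball : ∀ (c : EuclideanSpace ℝ (Fin (m+1))) (x : ℝ × (Fin m → ℝ)),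
      G.symm x ∈ Metric.closedBall c r ↔
        (x.1 - c 0)^2 + (∑ j, (x.2 j - c ((0 : Fin (m+1)).succAbove j))^2) ≤ r^2 := by
    intro c x
    rw [Metric.mem_closedBall, EuclideanSpace.dist_eq, Real.sqrt_le_left hr.le]
    have : ∀ i : Fin (m+1), dist ((G.symm x : EuclideanSpace ℝ (Fin (m+1))) i) (c i) ^ 2
        = (Fin.insertNth (α := fun _ : Fin (m+1) => ℝ) 0 x.1 x.2 i - c i)^2 := by
      intro i; rw [hcoord, Real.dist_eq, sq_abs]
    rw [Finset.sum_congr rfl fun i _ => this i,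
      Fin.sum_univ_succAbove (fun i => (Fin.insertNth (α := fun _ : Fin (m+1) => ℝ) 0 x.1 x.2 i - c i)^2) 0]
    simp only [Fin.insertNth_apply_same, Fin.insertNth_apply_succAbove]
  have hc2_0 : v 0 = a 0 + d := by
    rw [hv]
    simp [EuclideanSpace.single_apply]
  have hc2_s : ∀ j : Fin m,
      v ((0 : Fin (m+1)).succAbove j) = a ((0 : Fin (m+1)).succAbove j) := by
    intro j
    rw [hv]
    simp [EuclideanSpace.single_apply, Fin.succ_ne_zero j]
  -- slice bound
  set K : Set (Fin m → ℝ) := {y | q y ≤ r^2} with hK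
  have hTmeas : MeasurableSet (G.symm ⁻¹' (symmDiff (Metric.closedBall a r)
      (Metric.closedBall (v) r))) :=
    G.symm.measurable hmeas2
  have slice : ∀ y : Fin m → ℝ,
      volume ((fun t => (t, y)) ⁻¹' (G.symm ⁻¹' (symmDiff (Metric.closedBall a r)
        (Metric.closedBall (v) r))))
      ≤ K.indicator (fun _ => ENNReal.ofReal (2 * d)) y := by
    intro y
    have hset : (fun t => (t, y)) ⁻¹' (G.symm ⁻¹' (symmDiff (Metric.closedBall a r)
        (Metric.closedBall (v) r)))
        = symmDiff {t : ℝ | (t - a 0)^2 + q y ≤ r^2}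
            {t : ℝ | (t - (a 0 + d))^2 + q y ≤ r^2} := by
      ext t
      simp only [mem_preimage, Set.mem_symmDiff, hball, hc2_0, hc2_s, mem_setOf_eq, hq]
    rw [hset]
    by_cases hy : q y ≤ r^2
    · have hyK : y ∈ K := hy
      rw [Set.indicator_of_mem hyK]
      have e1 : {t : ℝ | (t - a 0)^2 + q y ≤ r^2} = {t : ℝ | (t - a 0)^2 ≤ r^2 - q y} := by
        ext t; simp only [mem_setOf_eq]; constructor <;> intro h <;> linarith
      have e2 : {t : ℝ | (t - (a 0 + d))^2 + q y ≤ r^2}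
          = {t : ℝ | (t - (a 0 + d))^2 ≤ r^2 - q y} := by
        ext t; simp only [mem_setOf_eq]; constructor <;> intro h <;> linarith
      rw [e1, e2, sq_set_eq_Icc _ _ (by linarith), sq_set_eq_Icc _ _ (by linarith)]
      have h1 : a 0 + d - Real.sqrt (r^2 - q y) = (a 0 - Real.sqrt (r^2 - q y)) + d := by ring
      have h2 : a 0 + d + Real.sqrt (r^2 - q y) = (a 0 + Real.sqrt (r^2 - q y)) + d := by ring
      rw [h1, h2]
      exact symmDiff_Icc_vol _ _ _ hd0.le
    · have : symmDiff {t : ℝ | (t - a 0)^2 + q y ≤ r^2}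
          {t : ℝ | (t - (a 0 + d))^2 + q y ≤ r^2} = ∅ := by
        ext t
        simp only [Set.mem_symmDiff, mem_setOf_eq, Set.mem_empty_iff_false, iff_false]
        rintro (⟨h1, _⟩ | ⟨h1, _⟩) <;> nlinarith [sq_nonneg (t - a 0), sq_nonneg (t - (a 0 + d))]
      rw [this]
      simp
  -- put it together with Fubini
  calc volume (G.symm ⁻¹' (symmDiff (Metric.closedBall a r)
        (Metric.closedBall (v) r)))
      = ∫⁻ y, volume ((fun t => (t, y)) ⁻¹' (G.symm ⁻¹' (symmDiff (Metric.closedBall a r)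
          (Metric.closedBall (v) r)))) := by
        rw [Measure.volume_eq_prod]
        exact Measure.prod_apply_symm hTmeas
    _ ≤ ∫⁻ y, K.indicator (fun _ => ENNReal.ofReal (2 * d)) y := lintegral_mono slice
    _ ≤ ENNReal.ofReal (2 * d) * volume K := lintegral_indicator_const_le _ _
    _ = ENNReal.ofReal (2 * d) *
          volume (Metric.closedBall
            ((EuclideanSpace.equiv (Fin m) ℝ).symm
              (fun j => a ((0 : Fin (m+1)).succAbove j))) r) := by
        congr 1
        have hKeq : K = (MeasurableEquiv.toLp 2 (Fin m → ℝ)).symm.symm ⁻¹'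
            (Metric.closedBall ((EuclideanSpace.equiv (Fin m) ℝ).symm
              (fun j => a ((0 : Fin (m+1)).succAbove j))) r) := by
          have hsum : ∀ y : Fin m → ℝ,
              (∑ j, dist (((MeasurableEquiv.toLp 2 (Fin m → ℝ)).symm.symm y) j)
                (((EuclideanSpace.equiv (Fin m) ℝ).symm
                  (fun j => a ((0 : Fin (m+1)).succAbove j))) j) ^ 2) = q y := by
            intro y
            refine Finset.sum_congr rfl fun j _ => ?_
            rw [Real.dist_eq, sq_abs]
            rfl
          ext y
          simp only [hK, mem_setOf_eq, mem_preimage, Metric.mem_closedBall,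
            EuclideanSpace.dist_eq, Real.sqrt_le_left hr.le, hsum y]
        rw [hKeq,
          ((EuclideanSpace.volume_preserving_symm_measurableEquiv_toLp (Fin m)).symm _).measure_preimage
            measurableSet_closedBall.nullMeasurableSet]
    _ = ENNReal.ofReal (2 * d) * (ENNReal.ofReal (r ^ m) *
          volume (Metric.closedBall (0 : EuclideanSpace ℝ (Fin m)) 1)) := by
        rw [Measure.addHaar_closedBall' volume _ hr.le, finrank_euclideanSpace_fin]
    _ ≤ ENNReal.ofReal
        (2 * (volume (Metric.closedBall (0 : EuclideanSpace ℝ (Fin m)) 1)).toReal *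
          r ^ m * d) := by
        rw [ENNReal.ofReal_mul (by positivity), ENNReal.ofReal_mul (by positivity),
          ENNReal.ofReal_mul (by norm_num), ENNReal.ofReal_mul (by norm_num),
          ENNReal.ofReal_toReal measure_closedBall_lt_top.ne]
        ring_nf
        exact le_refl _
end
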